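/- Let q ≥ 1 be an integer and define the smoothing spline equivalent kernel on the real line by K_ss(x, t) = Σ_{j=0}^{q−1} i·exp( i·|x−t|·exp( πi(2j+1)/(2q) ) ) / ( 2q·exp( iπ(2q−1)(2j+1)/(2q) ) ), where i is the imaginary unit. Then for all x, t ∈ ℝ, |K_ss(x, t)| ≤ ((q+1)/(2q)) · exp( −|x − t| · sin(π/(2q)) ). -/

import Mathlib

open Real

/-- The smoothing spline equivalent kernel on the real line:
`K_ss(x,t) = Σ_{j=0}^{q−1} i exp(i|x−t| exp(πi(2j+1)/(2q))) / (2q exp(iπ(2q−1)(2j+1)/(2q)))`. -/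
noncomputable def Kss (q : ℕ) (x t : ℝ) : ℂ :=
  ∑ j ∈ Finset.range q,
    Complex.I *
        Complex.exp (Complex.I * ((|x - t| : ℝ) : ℂ) *
          Complex.exp ((Real.pi : ℂ) * Complex.I * (2 * (j : ℂ) + 1) / (2 * (q : ℂ)))) /
      (2 * (q : ℂ) *
        Complex.exp (Complex.I * (Real.pi : ℂ) * (2 * (q : ℂ) - 1) * (2 * (j : ℂ) + 1) /
          (2 * (q : ℂ))))

/-! Each summand of `K_ss` has modulus `exp (-|x - t| sin θⱼ) / (2q)` with `θⱼ = π(2j+1)/(2q)`,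
and all the angles `θⱼ` lie in `[π/(2q), π - π/(2q)]`, where `sin` is at least `sin (π/(2q))`.
So the triangle inequality bounds `|K_ss|` by `q · exp (-|x - t| sin (π/(2q))) / (2q)`. -/

lemma Real.sin_le_sin_of_le_of_le_pi_sub {a θ : ℝ} (ha : 0 ≤ a) (haθ : a ≤ θ) (hθ : θ ≤ π - a) :
    sin a ≤ sin θ := by
  rcases le_or_gt θ (π / 2) with hθ' | hθ'
  · exact sin_le_sin_of_le_of_le_pi_div_two (by linarith) hθ' haθ
  · rw [← sin_pi_sub θ]
    exact sin_le_sin_of_le_of_le_pi_div_two (by linarith) (by linarith) (by linarith)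

lemma Complex.norm_exp_I_mul_ofReal_mul_exp_ofReal_mul_I (r θ : ℝ) :
    ‖exp (I * r * exp (θ * I))‖ = Real.exp (-r * Real.sin θ) := by
  rw [norm_exp]
  simp [mul_re, mul_im, exp_ofReal_mul_I_re, exp_ofReal_mul_I_im]

lemma pi_div_le_pi_mul_odd_div {q j : ℕ} (hj : j < q) :
    π / (2 * q) ≤ π * (2 * j + 1) / (2 * q) ∧ π * (2 * j + 1) / (2 * q) ≤ π - π / (2 * q) := by
  have hq : (0 : ℝ) < 2 * q := mul_pos two_pos (by exact_mod_cast Nat.zero_lt_of_lt hj)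
  have hjq : (j : ℝ) + 1 ≤ q := by exact_mod_cast hj
  constructor
  · gcongr
    nlinarith [pi_pos, (Nat.cast_nonneg j : (0 : ℝ) ≤ j)]
  · rw [sub_eq_add_neg, ← neg_div, div_le_iff₀ hq, add_mul, div_mul_cancel₀ _ hq.ne']
    nlinarith [pi_pos]

lemma norm_Kss_term_le {q j : ℕ} (hj : j < q) {r : ℝ} (hr : 0 ≤ r) :
    ‖Complex.I *
        Complex.exp (Complex.I * (r : ℂ) *
          Complex.exp ((Real.pi : ℂ) * Complex.I * (2 * (j : ℂ) + 1) / (2 * (q : ℂ)))) /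
      (2 * (q : ℂ) *
        Complex.exp (Complex.I * (Real.pi : ℂ) * (2 * (q : ℂ) - 1) * (2 * (j : ℂ) + 1) /
          (2 * (q : ℂ))))‖
    ≤ 1 / (2 * q) * Real.exp (-r * Real.sin (π / (2 * q))) := by
  have hq : (q : ℂ) ≠ 0 := by exact_mod_cast (Nat.zero_lt_of_lt hj).ne'
  have hθ : (π : ℂ) * Complex.I * (2 * j + 1) / (2 * q) =
      ((π * (2 * j + 1) / (2 * q) : ℝ) : ℂ) * Complex.I := by
    push_cast; field_simp
  have hs : Complex.I * π * (2 * q - 1) * (2 * j + 1) / (2 * q) =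
      ((π * (2 * q - 1) * (2 * j + 1) / (2 * q) : ℝ) : ℂ) * Complex.I := by
    push_cast; field_simp
  rw [hθ, hs, norm_div, norm_mul, norm_mul, norm_mul, Complex.norm_I,
    Complex.norm_exp_I_mul_ofReal_mul_exp_ofReal_mul_I, Complex.norm_exp_ofReal_mul_I,
    Complex.norm_two, Complex.norm_natCast, one_mul, mul_one, one_div_mul_eq_div]
  obtain ⟨hlo, hhi⟩ := pi_div_le_pi_mul_odd_div hj
  rw [neg_mul, neg_mul]
  gcongr
  exact sin_le_sin_of_le_of_le_pi_sub (by positivity) hlo hhi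

theorem stmt11_general (q : ℕ) (x t : ℝ) :
    ‖Kss q x t‖ ≤ ((q : ℝ) + 1) / (2 * q) * Real.exp (-|x - t| * Real.sin (Real.pi / (2 * q))) := by
  calc ‖Kss q x t‖
      ≤ ∑ _j ∈ Finset.range q, 1 / (2 * q) * Real.exp (-|x - t| * Real.sin (π / (2 * q))) :=
        (norm_sum_le _ _).trans <| Finset.sum_le_sum fun j hj =>
          norm_Kss_term_le (Finset.mem_range.1 hj) (abs_nonneg _)
    _ = (q : ℝ) / (2 * q) * Real.exp (-|x - t| * Real.sin (π / (2 * q))) := by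
        rw [Finset.sum_const, Finset.card_range, nsmul_eq_mul, ← mul_assoc, mul_one_div]
    _ ≤ ((q : ℝ) + 1) / (2 * q) * Real.exp (-|x - t| * Real.sin (π / (2 * q))) := by
        gcongr
        linarith

theorem stmt11 (q : ℕ) (hq : 1 ≤ q) (x t : ℝ) :
    ‖Kss q x t‖ ≤ ((q : ℝ) + 1) / (2 * q) * Real.exp (-|x - t| * Real.sin (Real.pi / (2 * q))) :=
  stmt11_general q x t
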